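/- ∫₀^1 x · ln(1/(1−x²)) · K(x) dx = 4(1 − ln 2), where K(x) = ∫₀^{π/2} dθ/√(1 − x² sin²θ) is the complete elliptic integral of the first kind. -/

import Mathlib

/-!
Write `K` as an integral over `θ ∈ (0, π/2)` and swap the two integrations, which is legitimate
because the integrand is nonnegative. For fixed `θ`, put `k = sin θ`, `c = cos θ` and
`w = √(1 - x²k²)`. Since `w² - c² = k²(1 - x²)`, the `x`-integrand has the elementary
primitive `((w - c) log (w - c) + (w + c) log (w + c) - 2w - w log k²) / k²`, and the
`x`-integral equals `2 (c log (2c / (1 + c)) + 1 - c) / (1 - c²)`. The substitution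
`t = tan (θ/2)` turns this into `((1 - t²) log (1 - t²) / t² + 2) dt`, with primitive
`4t - ((1 - t)² log (1 - t) + (1 + t)² log (1 + t)) / t`; it vanishes as `t → 0` and equals
`4 - 4 log 2` at `t = 1`.
-/

open Real MeasureTheory

/-- The complete elliptic integral of the first kind. -/
noncomputable def ellipticK (x : ℝ) : ℝ :=
  ∫ θ in (0 : ℝ)..(π / 2), 1 / Real.sqrt (1 - x ^ 2 * Real.sin θ ^ 2)

open Set

theorem integral_Ioo_eq_sub_of_hasDerivAt_of_nonneg {f f' : ℝ → ℝ} {a b : ℝ} (hab : a ≤ b)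
    (hcont : ContinuousOn f (Icc a b)) (hderiv : ∀ x ∈ Ioo a b, HasDerivAt f (f' x) x)
    (hpos : ∀ x ∈ Ioo a b, 0 ≤ f' x) : ∫ x in Ioo a b, f' x = f b - f a := by
  rw [← integral_Ioc_eq_integral_Ioo, ← intervalIntegral.integral_of_le hab]
  exact intervalIntegral.integral_eq_sub_of_hasDerivAt_of_le hab hcont hderiv
    ((intervalIntegrable_iff_integrableOn_Ioc_of_le hab).2
      (intervalIntegral.integrableOn_deriv_of_nonneg hcont hderiv hpos))

theorem integral_integral_swap_of_nonneg {α β : Type*} [MeasurableSpace α] [MeasurableSpace β]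
    {μ : Measure α} {ν : Measure β} [SFinite μ] [SFinite ν] {f : α → β → ℝ}
    (hf : AEStronglyMeasurable (Function.uncurry f) (μ.prod ν))
    (hf_nonneg : ∀ᵐ y ∂ν, ∀ᵐ x ∂μ, 0 ≤ f x y)
    (hf_int : ∀ᵐ y ∂ν, Integrable (fun x => f x y) μ)
    (hint : Integrable (fun y => ∫ x, f x y ∂μ) ν) :
    ∫ x, ∫ y, f x y ∂ν ∂μ = ∫ y, ∫ x, f x y ∂μ ∂ν := by
  refine integral_integral_swap ((integrable_prod_iff' hf).2 ⟨hf_int, hint.congr ?_⟩)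
  filter_upwards [hf_nonneg] with y hy
  refine integral_congr_ae ?_
  filter_upwards [hy] with x hx
  exact (Real.norm_of_nonneg hx).symm

-- At `t = 0` the function takes the junk value `f 0 / 0 = 0`, which is also its limit `f' 0 = 0`.
theorem continuousAt_div_self_of_hasDerivAt_zero {f : ℝ → ℝ} (hf : HasDerivAt f 0 0)
    (h0 : f 0 = 0) : ContinuousAt (fun t => f t / t) 0 := by
  rw [← continuousWithinAt_compl_self, ContinuousWithinAt, div_zero]
  refine (hasDerivAt_iff_tendsto_slope.1 hf).congr fun t => ?_
  simp [slope_def_field, h0]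

theorem ellipticK_eq_setIntegral (x : ℝ) :
    ellipticK x = ∫ θ in Ioo 0 (π / 2), 1 / √(1 - x ^ 2 * sin θ ^ 2) := by
  rw [ellipticK, intervalIntegral.integral_of_le (by positivity), integral_Ioc_eq_integral_Ioo]

noncomputable def innerPrimitive (k c x : ℝ) : ℝ :=
  ((√(1 - x ^ 2 * k ^ 2) - c) * log (√(1 - x ^ 2 * k ^ 2) - c)
    + (√(1 - x ^ 2 * k ^ 2) + c) * log (√(1 - x ^ 2 * k ^ 2) + c)
    - 2 * √(1 - x ^ 2 * k ^ 2) - √(1 - x ^ 2 * k ^ 2) * log (k ^ 2)) / k ^ 2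

noncomputable def innerIntegralValue (c : ℝ) : ℝ :=
  2 * (c * log (2 * c / (1 + c)) + 1 - c) / (1 - c ^ 2)

theorem continuous_innerPrimitive (k c : ℝ) : Continuous (innerPrimitive k c) := by
  have hw : Continuous fun x : ℝ => √(1 - x ^ 2 * k ^ 2) := by fun_prop
  unfold innerPrimitive
  refine Continuous.div_const (Continuous.sub (Continuous.sub (Continuous.add ?_ ?_) ?_) ?_) _
  · exact continuous_mul_log.comp (hw.sub continuous_const)
  · exact continuous_mul_log.comp (hw.add continuous_const)
  · fun_prop
  · fun_prop

theorem hasDerivAt_mul_log_sub_add {c w : ℝ} (h₁ : w - c ≠ 0) (h₂ : w + c ≠ 0) :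
    HasDerivAt (fun w => (w - c) * log (w - c) + (w + c) * log (w + c) - 2 * w)
      (log (w - c) + log (w + c)) w := by
  have h₁' := (hasDerivAt_mul_log h₁).comp w ((hasDerivAt_id w).sub_const c)
  have h₂' := (hasDerivAt_mul_log h₂).comp w ((hasDerivAt_id w).add_const c)
  exact ((h₁'.add h₂').sub ((hasDerivAt_id w).const_mul 2)).congr_deriv (by ring)

theorem hasDerivAt_innerPrimitive {k c x : ℝ} (hk : k ≠ 0) (hkc : k ^ 2 + c ^ 2 = 1)
    (hx : x ∈ Ioo 0 1) :
    HasDerivAt (innerPrimitive k c)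
      (x * log (1 / (1 - x ^ 2)) * (1 / √(1 - x ^ 2 * k ^ 2))) x := by
  obtain ⟨hx₀, hx₁⟩ := hx
  have hk2 : 0 < k ^ 2 := by positivity
  have hv : 0 < 1 - x ^ 2 * k ^ 2 := by nlinarith
  set w := √(1 - x ^ 2 * k ^ 2)
  have hw_sq : w ^ 2 = 1 - x ^ 2 * k ^ 2 := sq_sqrt hv.le
  have hwc : w ^ 2 - c ^ 2 = k ^ 2 * (1 - x ^ 2) := by rw [hw_sq]; linear_combination -hkc
  have hcw : |c| < w := by
    have : 0 < k ^ 2 * (1 - x ^ 2) := mul_pos hk2 (by nlinarith)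
    exact abs_lt_of_sq_lt_sq (by linarith) (sqrt_nonneg _)
  have h₁ : 0 < w - c := by linarith [le_abs_self c]
  have h₂ : 0 < w + c := by linarith [neg_abs_le c]
  have hlog : log (w - c) + log (w + c) - log (k ^ 2) = log (1 - x ^ 2) := by
    rw [← log_mul h₁.ne' h₂.ne', ← log_div (by positivity) hk2.ne']
    congr 1
    field_simp
    linear_combination hwc
  have hw' : HasDerivAt (fun y => √(1 - y ^ 2 * k ^ 2)) (-(2 * x * k ^ 2) / (2 * w)) x := by
    refine HasDerivAt.sqrt ?_ hv.ne'
    simpa using ((hasDerivAt_pow 2 x).mul_const (k ^ 2)).const_sub 1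
  have hF := (hasDerivAt_mul_log_sub_add h₁.ne' h₂.ne').comp x hw'
  refine ((hF.sub (hw'.mul_const (log (k ^ 2)))).div_const (k ^ 2)).congr_deriv ?_
  rw [one_div (1 - x ^ 2), log_inv, ← hlog]
  have hw0 : w ≠ 0 := by positivity
  field_simp
  ring

theorem innerPrimitive_one_sub_zero {k c : ℝ} (hk : k ≠ 0) (hc : 0 < c)
    (hkc : k ^ 2 + c ^ 2 = 1) :
    innerPrimitive k c 1 - innerPrimitive k c 0 = innerIntegralValue c := by
  have hk2 : k ^ 2 = 1 - c ^ 2 := by linear_combination hkc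
  have hc1 : c < 1 := by nlinarith [pow_pos (abs_pos.2 hk) 2, sq_abs k]
  have hw₁ : √(1 - 1 ^ 2 * k ^ 2) = c := by
    rw [show 1 - 1 ^ 2 * k ^ 2 = c ^ 2 by linear_combination -hkc, sqrt_sq hc.le]
  have hw₀ : √(1 - 0 ^ 2 * k ^ 2) = 1 := by simp
  have hlog : log (1 - c ^ 2) = log (1 - c) + log (1 + c) := by
    rw [← log_mul (by linarith) (by linarith)]; ring_nf
  have hc2 : 1 - c ^ 2 ≠ 0 := by nlinarith
  unfold innerPrimitive innerIntegralValue
  rw [hw₁, hw₀, sub_self, log_zero, hk2, hlog, ← two_mul,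
    log_div (by positivity) (by linarith), log_mul two_ne_zero hc.ne']
  field_simp
  ring

theorem mul_log_one_div_one_sub_sq_mul_one_div_sqrt_nonneg {x : ℝ} (hx : x ∈ Ioo 0 1)
    (y : ℝ) : 0 ≤ x * log (1 / (1 - x ^ 2)) * (1 / √y) := by
  have h : 0 < 1 - x ^ 2 := by nlinarith [hx.1, hx.2]
  have hlog : 0 ≤ log (1 / (1 - x ^ 2)) := log_nonneg ((one_le_div h).2 (by nlinarith [hx.1]))
  exact mul_nonneg (mul_nonneg hx.1.le hlog) (by positivity)

theorem integrableOn_innerIntegrand {k c : ℝ} (hk : k ≠ 0) (hkc : k ^ 2 + c ^ 2 = 1) :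
    IntegrableOn (fun x => x * log (1 / (1 - x ^ 2)) * (1 / √(1 - x ^ 2 * k ^ 2))) (Ioo 0 1) :=
  (intervalIntegral.integrableOn_deriv_of_nonneg (continuous_innerPrimitive k c).continuousOn
    (fun _ hx => hasDerivAt_innerPrimitive hk hkc hx)
    (fun _ hx => mul_log_one_div_one_sub_sq_mul_one_div_sqrt_nonneg hx _)).mono_set
    Ioo_subset_Ioc_self

theorem integral_innerIntegrand {k c : ℝ} (hk : k ≠ 0) (hc : 0 < c)
    (hkc : k ^ 2 + c ^ 2 = 1) :
    ∫ x in Ioo 0 1, x * log (1 / (1 - x ^ 2)) * (1 / √(1 - x ^ 2 * k ^ 2)) =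
      innerIntegralValue c := by
  rw [integral_Ioo_eq_sub_of_hasDerivAt_of_nonneg zero_le_one
    (continuous_innerPrimitive k c).continuousOn
    (fun _ hx => hasDerivAt_innerPrimitive hk hkc hx)
    (fun _ hx => mul_log_one_div_one_sub_sq_mul_one_div_sqrt_nonneg hx _),
    innerPrimitive_one_sub_zero hk hc hkc]

theorem innerIntegralValue_cos_eq_integral {θ : ℝ} (hθ : θ ∈ Ioo 0 (π / 2)) :
    innerIntegralValue (cos θ) =
      ∫ x in Ioo 0 1, x * log (1 / (1 - x ^ 2)) * (1 / √(1 - x ^ 2 * sin θ ^ 2)) :=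
  (integral_innerIntegrand (sin_pos_of_pos_of_lt_pi hθ.1 (by linarith [hθ.2, pi_pos])).ne'
    (cos_pos_of_mem_Ioo ⟨by linarith [hθ.1, pi_pos], hθ.2⟩) (sin_sq_add_cos_sq θ)).symm

noncomputable def sqMulLogPair (t : ℝ) : ℝ :=
  (1 - t) ^ 2 * log (1 - t) + (1 + t) ^ 2 * log (1 + t)

noncomputable def outerPrimitive (t : ℝ) : ℝ :=
  4 * t - sqMulLogPair t / t

theorem continuous_sqMulLogPair : Continuous sqMulLogPair := by
  have h (f : ℝ → ℝ) (hf : Continuous f) : Continuous fun t => f t ^ 2 * log (f t) := by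
    simp_rw [sq, mul_assoc]
    exact hf.mul (continuous_mul_log.comp hf)
  exact (h _ (by fun_prop)).add (h _ (by fun_prop))

theorem hasDerivAt_sqMulLogPair {t : ℝ} (h₁ : 1 - t ≠ 0) (h₂ : 1 + t ≠ 0) :
    HasDerivAt sqMulLogPair (2 * ((1 + t) * log (1 + t) - (1 - t) * log (1 - t) + t)) t := by
  have hsub : HasDerivAt (fun t : ℝ => 1 - t) (-1) t := by
    simpa using (hasDerivAt_id t).const_sub 1
  have hadd : HasDerivAt (fun t : ℝ => 1 + t) 1 t := by
    simpa using (hasDerivAt_id t).const_add 1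
  refine (((hsub.pow 2).mul (hsub.log h₁)).add ((hadd.pow 2).mul (hadd.log h₂))).congr_deriv ?_
  simp only [Pi.pow_apply]
  field_simp
  ring

theorem continuous_outerPrimitive : Continuous outerPrimitive := by
  refine continuous_iff_continuousAt.2 fun t => (continuousAt_id.const_mul 4).sub ?_
  rcases eq_or_ne t 0 with rfl | ht
  · refine continuousAt_div_self_of_hasDerivAt_zero ?_ (by simp [sqMulLogPair])
    simpa using hasDerivAt_sqMulLogPair (t := 0) (by norm_num) (by norm_num)
  · exact continuous_sqMulLogPair.continuousAt.div continuousAt_id ht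

theorem hasDerivAt_outerPrimitive {t : ℝ} (h₀ : t ≠ 0) (h₁ : 1 - t ≠ 0)
    (h₂ : 1 + t ≠ 0) :
    HasDerivAt outerPrimitive ((1 - t ^ 2) * log (1 - t ^ 2) / t ^ 2 + 2) t := by
  refine (((hasDerivAt_id t).const_mul 4).sub
    ((hasDerivAt_sqMulLogPair h₁ h₂).div (hasDerivAt_id t) h₀)).congr_deriv ?_
  rw [show 1 - t ^ 2 = (1 - t) * (1 + t) by ring, log_mul h₁ h₂]
  simp only [sqMulLogPair, id]
  field_simp
  ring

theorem hasDerivAt_outerPrimitive_tan_half {θ : ℝ} (hθ : θ ∈ Ioo 0 (π / 2)) :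
    HasDerivAt (fun θ => outerPrimitive (tan (θ / 2))) (innerIntegralValue (cos θ)) θ := by
  obtain ⟨h₀, h₁⟩ := hθ
  have hcos : 0 < cos (θ / 2) := cos_pos_of_mem_Ioo ⟨by linarith, by linarith⟩
  set t := tan (θ / 2) with ht
  have ht₀ : 0 < t := tan_pos_of_pos_of_lt_pi_div_two (by linarith) (by linarith)
  have ht₁ : t < 1 := by
    rw [ht, ← tan_pi_div_four]
    exact tan_lt_tan_of_nonneg_of_lt_pi_div_two (by linarith) (by linarith) (by linarith)
  have hsec : 1 / cos (θ / 2) ^ 2 = 1 + t ^ 2 := by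
    rw [← inv_one_add_tan_sq hcos.ne', one_div, inv_inv]
  have hcos_t : cos θ = (1 - t ^ 2) / (1 + t ^ 2) := by
    have : 0 < cos θ := cos_pos_of_mem_Ioo ⟨by linarith, h₁⟩
    exact cos_eq_two_mul_tan_half_div_one_sub_tan_half_sq θ (by linarith)
  have htan := (hasDerivAt_tan hcos.ne').comp θ ((hasDerivAt_id θ).div_const 2)
  refine ((hasDerivAt_outerPrimitive ht₀.ne' (by linarith) (by linarith)).comp θ
    htan).congr_deriv ?_
  have h2c : 2 * cos θ / (1 + cos θ) = 1 - t ^ 2 := by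
    rw [hcos_t]; field_simp; ring
  have h1c : 1 - cos θ ^ 2 = 4 * t ^ 2 / (1 + t ^ 2) ^ 2 := by
    rw [hcos_t]; field_simp; ring
  rw [innerIntegralValue, h2c, h1c, hsec, hcos_t]
  have ht0 : t ≠ 0 := ht₀.ne'
  field_simp
  ring

theorem continuousOn_outerPrimitive_tan_half :
    ContinuousOn (fun θ => outerPrimitive (tan (θ / 2))) (Icc 0 (π / 2)) := by
  intro θ hθ
  have hcos : cos (θ / 2) ≠ 0 :=
    (cos_pos_of_mem_Ioo ⟨by linarith [hθ.1, pi_pos], by linarith [hθ.2, pi_pos]⟩).ne'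
  have htan : ContinuousAt (fun θ => tan (θ / 2)) θ :=
    (continuousAt_tan.2 hcos).comp (f := fun θ : ℝ => θ / 2) (by fun_prop)
  exact (continuous_outerPrimitive.continuousAt.comp htan).continuousWithinAt

theorem innerIntegralValue_cos_nonneg {θ : ℝ} (hθ : θ ∈ Ioo 0 (π / 2)) :
    0 ≤ innerIntegralValue (cos θ) := by
  rw [innerIntegralValue_cos_eq_integral hθ]
  exact setIntegral_nonneg measurableSet_Ioo fun x hx =>
    mul_log_one_div_one_sub_sq_mul_one_div_sqrt_nonneg hx _

theorem integrableOn_innerIntegralValue_cos :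
    IntegrableOn (fun θ => innerIntegralValue (cos θ)) (Ioo 0 (π / 2)) :=
  (intervalIntegral.integrableOn_deriv_of_nonneg continuousOn_outerPrimitive_tan_half
    (fun _ hθ => hasDerivAt_outerPrimitive_tan_half hθ)
    (fun _ hθ => innerIntegralValue_cos_nonneg hθ)).mono_set Ioo_subset_Ioc_self

theorem integral_innerIntegralValue_cos :
    ∫ θ in Ioo 0 (π / 2), innerIntegralValue (cos θ) = 4 * (1 - log 2) := by
  rw [integral_Ioo_eq_sub_of_hasDerivAt_of_nonneg (by positivity)
    continuousOn_outerPrimitive_tan_half (fun _ hθ => hasDerivAt_outerPrimitive_tan_half hθ)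
    (fun _ hθ => innerIntegralValue_cos_nonneg hθ), div_div,
    show π / (2 * 2) = π / 4 by ring, tan_pi_div_four, zero_div, tan_zero]
  norm_num [outerPrimitive, sqMulLogPair]
  ring

theorem stmt_11 :
    ∫ x in Set.Ioo (0 : ℝ) 1, x * Real.log (1 / (1 - x ^ 2)) * ellipticK x =
      4 * (1 - Real.log 2) := by
  set f : ℝ → ℝ → ℝ := fun x θ =>
    x * log (1 / (1 - x ^ 2)) * (1 / √(1 - x ^ 2 * sin θ ^ 2))
  have hK (x : ℝ) :
      x * log (1 / (1 - x ^ 2)) * ellipticK x = ∫ θ in Ioo 0 (π / 2), f x θ := by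
    rw [ellipticK_eq_setIntegral, ← integral_const_mul]
  have hinner : ∀ θ ∈ Ioo 0 (π / 2), ∫ x in Ioo 0 1, f x θ = innerIntegralValue (cos θ) :=
    fun θ hθ => (innerIntegralValue_cos_eq_integral hθ).symm
  calc ∫ x in Ioo 0 1, x * log (1 / (1 - x ^ 2)) * ellipticK x
      = ∫ x in Ioo 0 1, ∫ θ in Ioo 0 (π / 2), f x θ := by simp_rw [hK]
    _ = ∫ θ in Ioo 0 (π / 2), ∫ x in Ioo 0 1, f x θ := by
      refine integral_integral_swap_of_nonneg (by fun_prop) ?_ ?_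
        (integrableOn_innerIntegralValue_cos.congr_fun (fun θ hθ => (hinner θ hθ).symm)
          measurableSet_Ioo)
      · refine ae_of_all _ fun θ => (ae_restrict_iff' measurableSet_Ioo).2 (ae_of_all _ ?_)
        exact fun x hx => mul_log_one_div_one_sub_sq_mul_one_div_sqrt_nonneg hx _
      · refine (ae_restrict_iff' measurableSet_Ioo).2 (ae_of_all _ fun θ hθ => ?_)
        have hsin : 0 < sin θ := sin_pos_of_pos_of_lt_pi hθ.1 (by linarith [hθ.2, pi_pos])
        exact integrableOn_innerIntegrand hsin.ne' (sin_sq_add_cos_sq θ)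
    _ = ∫ θ in Ioo 0 (π / 2), innerIntegralValue (cos θ) :=
      setIntegral_congr_fun measurableSet_Ioo hinner
    _ = 4 * (1 - log 2) := integral_innerIntegralValue_cos
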